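/- Let λ be a k-bounded partition whose largest hook length satisfies λ_1 + ℓ(λ) − 1 ≤ k. Then for every composition μ, 𝒦^{(k)}_{λμ} equals the number of set-valued tableaux of shape λ and weight μ; consequently the affine Grothendieck polynomial coincides with the stable Grothendieck polynomial, G^{(k)}_λ = G_λ. -/
import Mathlib


open scoped Classical

namespace AffineKTheory

noncomputable instance : Nonempty YoungDiagram := ⟨⊥⟩

noncomputable instance : Nonempty YoungDiagram := ⟨⊥⟩

/-! ## Cells, hooks, cores, residues -/

/-- Hook length of the cell `(r, c)` in the diagram `γ`. -/
def hookLen (γ : YoungDiagram) (r c : ℕ) : ℕ :=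
  (γ.rowLen r - c) + (γ.colLen c - r) - 1

/-- A `p`-core: a diagram none of whose cells has hook length `p`. -/
def IsCore (p : ℕ) (γ : YoungDiagram) : Prop :=
  ∀ c : ℕ × ℕ, c ∈ γ → hookLen γ c.1 c.2 ≠ p

/-- The `(k+1)`-residue of a cell.  (Rows of the Ferrers shape are indexed so that the cell
directly above `(r, c)` -- in the Ferrers sense of the next, shorter, row -- is `(r+1, c)`.) -/
def residue (k : ℕ) (c : ℕ × ℕ) : ZMod (k + 1) :=
  (c.2 : ZMod (k + 1)) - (c.1 : ZMod (k + 1))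

/-- A removable corner of `γ`: a cell of `γ` with no cell above it nor to its right. -/
def Removable (γ : YoungDiagram) (c : ℕ × ℕ) : Prop :=
  c ∈ γ ∧ (c.1 + 1, c.2) ∉ γ ∧ (c.1, c.2 + 1) ∉ γ

/-- An addable corner of `γ`: a cell outside `γ` whose addition again yields a partition shape. -/
def Addable (γ : YoungDiagram) (c : ℕ × ℕ) : Prop :=
  c ∉ γ ∧ ∀ d : ℕ × ℕ, d ≤ c → d ≠ c → d ∈ γ

/-- A cell is `γ`-blocked if it lies below a cell of `γ`. -/
def Blocked (γ : YoungDiagram) (c : ℕ × ℕ) : Prop :=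
  (c.1 + 1, c.2) ∈ γ

/-- The number of cells of `γ` in row `i` whose hook length is at most `k`:
the `i`-th part of `𝔭(γ)`. -/
noncomputable def pRow (k : ℕ) (γ : YoungDiagram) (i : ℕ) : ℕ :=
  (γ.cells.filter (fun c => c.1 = i ∧ hookLen γ c.1 c.2 ≤ k)).card

/-- The number of cells of `γ` with `k`-bounded hook length, i.e. `|𝔭(γ)|`. -/
noncomputable def pSize (k : ℕ) (γ : YoungDiagram) : ℕ :=
  (γ.cells.filter (fun c => hookLen γ c.1 c.2 ≤ k)).card

/-- A `k`-bounded partition: all parts at most `k`. -/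
def IsKBounded (k : ℕ) (lam : YoungDiagram) : Prop :=
  ∀ i, lam.rowLen i ≤ k

/-- `𝔭(γ)`: the `k`-bounded partition obtained from a `(k+1)`-core `γ` by deleting every cell of
hook length greater than `k` and reading off row lengths. -/
noncomputable def pPart (k : ℕ) (γ : YoungDiagram) : YoungDiagram :=
  Classical.epsilon fun lam => ∀ i, lam.rowLen i = pRow k γ i

/-- `𝔠(λ)`: the unique `(k+1)`-core corresponding to the `k`-bounded partition `λ` under the
bijection `𝔭`. -/
noncomputable def coreOf (k : ℕ) (lam : YoungDiagram) : YoungDiagram :=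
  Classical.epsilon fun γ => IsCore (k + 1) γ ∧ ∀ i, pRow k γ i = lam.rowLen i

/-- The `k`-conjugate `λ^{ω_k} = 𝔭(𝔠(λ)')` of a `k`-bounded partition. -/
noncomputable def kConj (k : ℕ) (lam : YoungDiagram) : YoungDiagram :=
  pPart k ((coreOf k lam).transpose)

/-- A `k`-bounded composition: a list of parts, each between `1` and `k`. -/
def IsKBoundedComp (k : ℕ) (α : List ℕ) : Prop :=
  ∀ a ∈ α, 1 ≤ a ∧ a ≤ k

/-- Dominance order on partitions. -/
def Dominates (mu lam : YoungDiagram) : Prop :=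
  mu.card = lam.card ∧
    ∀ n : ℕ, ∑ i ∈ Finset.range n, lam.rowLen i ≤ ∑ i ∈ Finset.range n, mu.rowLen i


/-! ## Set-valued fillings and affine set-valued tableaux -/

/-- A set-valued filling of the shape `γ`: each cell of `γ` carries a finite nonempty set of
positive integers, empty outside `γ`, with `max X < min Y` when `X` is directly below `Y` and
`max X ≤ min Y` when `X` is directly to the left of `Y`. -/
def IsSVFilling (γ : YoungDiagram) (e : ℕ × ℕ → Finset ℕ) : Prop :=
  (∀ c : ℕ × ℕ, c ∈ γ ↔ (e c).Nonempty) ∧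
  (∀ c : ℕ × ℕ, ∀ x ∈ e c, 0 < x) ∧
  (∀ r c : ℕ, ∀ x ∈ e (r, c), ∀ y ∈ e (r + 1, c), x < y) ∧
  (∀ r c : ℕ, ∀ x ∈ e (r, c), ∀ y ∈ e (r, c + 1), x ≤ y)

/-- The set of cells of `T_{≤ x}`: cells containing a letter `≤ x`. -/
noncomputable def shapeLe (γ : YoungDiagram) (e : ℕ × ℕ → Finset ℕ) (x : ℕ) : Finset (ℕ × ℕ) :=
  γ.cells.filter fun c => ∃ y ∈ e c, y ≤ x

/-- A standard affine set-valued tableau of degree `n` and shape `γ`: a set-valued filling with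
letters `1, …, n` such that for each `x`, the shape of `T_{≤x}` is a `(k+1)`-core and the letter
`x` occupies exactly all of its removable corners of one single residue. -/
def IsStdASVT (k n : ℕ) (γ : YoungDiagram) (e : ℕ × ℕ → Finset ℕ) : Prop :=
  IsSVFilling γ e ∧
  (∀ c : ℕ × ℕ, ∀ y ∈ e c, y ≤ n) ∧
  ∀ x : ℕ, 1 ≤ x → x ≤ n →
    ∃ δ : YoungDiagram, IsCore (k + 1) δ ∧ δ.cells = shapeLe γ e x ∧
      ∃ i : ZMod (k + 1), (∃ c, x ∈ e c) ∧
        ∀ c : ℕ × ℕ, x ∈ e c ↔ Removable δ c ∧ residue k c = i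

/-- The alphabet `𝒜_{α,x} = {Σ^{x-1}α + 1, …, Σ^x α}`. -/
def alphaBlock (α : List ℕ) (x : ℕ) : Finset ℕ :=
  Finset.Ioc ((α.take (x - 1)).sum) ((α.take x).sum)

/-- `c` is the lowest occurrence of the letter `y`. -/
def IsLowestOcc (e : ℕ × ℕ → Finset ℕ) (y : ℕ) (c : ℕ × ℕ) : Prop :=
  y ∈ e c ∧ ∀ d : ℕ × ℕ, y ∈ e d → c.1 ≤ d.1

/-- `a` comes strictly before `b` in the reading order (top to bottom, left to right;
higher rows of the Ferrers shape have larger first coordinate here). -/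
def ReadBefore (a b : ℕ × ℕ) : Prop :=
  b.1 < a.1 ∨ (a.1 = b.1 ∧ a.2 < b.2)

/-- An affine set-valued tableau of weight `α` and shape `γ`: a standard affine set-valued
tableau of degree `|α|` such that for each `x`, the lowest reading word in `𝒜_{α,x}` is
increasing, the letters of `𝒜_{α,x}` occupy exactly `α_x` distinct residues, and they form a
horizontal strip. -/
def IsASVT (k : ℕ) (α : List ℕ) (γ : YoungDiagram) (e : ℕ × ℕ → Finset ℕ) : Prop :=
  IsStdASVT k α.sum γ e ∧
  ∀ x : ℕ, 1 ≤ x → x ≤ α.length →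
    (∀ y z : ℕ, y ∈ alphaBlock α x → z ∈ alphaBlock α x → y < z →
      ∀ cy cz : ℕ × ℕ, IsLowestOcc e y cy → IsLowestOcc e z cz → ReadBefore cy cz) ∧
    (((γ.cells.filter fun c => ∃ y ∈ alphaBlock α x, y ∈ e c).image (residue k)).card
        = α.getD (x - 1) 0) ∧
    (∀ c d : ℕ × ℕ, (∃ y ∈ alphaBlock α x, y ∈ e c) → (∃ y ∈ alphaBlock α x, y ∈ e d) →
      c.2 = d.2 → c = d)

/-- `𝒦^{(k)}_{λα}`: the number of affine set-valued tableaux of shape `𝔠(λ)` and weight `α`. -/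
noncomputable def Kcal (k : ℕ) (lam : YoungDiagram) (α : List ℕ) : ℕ :=
  Nat.card {e : ℕ × ℕ → Finset ℕ // IsASVT k α (coreOf k lam) e}

/-- A `k`-tableau of shape `γ` and weight `α`: a semistandard filling with letters `1,…,ℓ(α)`
(recorded as `0` outside `γ`) in which the letter `i` occupies exactly `α_i` distinct residues. -/
def IsKTab (k : ℕ) (α : List ℕ) (γ : YoungDiagram) (u : ℕ × ℕ → ℕ) : Prop :=
  (∀ c : ℕ × ℕ, c ∈ γ ↔ u c ≠ 0) ∧
  (∀ c : ℕ × ℕ, u c ≤ α.length) ∧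
  (∀ r c : ℕ, (r, c) ∈ γ → (r + 1, c) ∈ γ → u (r, c) < u (r + 1, c)) ∧
  (∀ r c : ℕ, (r, c) ∈ γ → (r, c + 1) ∈ γ → u (r, c) ≤ u (r, c + 1)) ∧
  ∀ i : ℕ, 1 ≤ i → i ≤ α.length →
    ((γ.cells.filter fun c => u c = i).image (residue k)).card = α.getD (i - 1) 0

/-- `K^{(k)}_{λα}`: the number of `k`-tableaux of shape `𝔠(λ)` and weight `α`. -/
noncomputable def Kktab (k : ℕ) (lam : YoungDiagram) (α : List ℕ) : ℕ :=
  Nat.card {u : ℕ × ℕ → ℕ // IsKTab k α (coreOf k lam) u}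

/-- A plain set-valued tableau of shape `λ` and weight `α`. -/
def IsSVT (α : List ℕ) (lam : YoungDiagram) (e : ℕ × ℕ → Finset ℕ) : Prop :=
  IsSVFilling lam e ∧ (∀ c : ℕ × ℕ, ∀ x ∈ e c, x ≤ α.length) ∧
  ∀ i : ℕ, 1 ≤ i → i ≤ α.length →
    (lam.cells.filter fun c => i ∈ e c).card = α.getD (i - 1) 0

/-- `𝒦_{λα}`: the number of set-valued tableaux of shape `λ` and weight `α`. -/
noncomputable def KcalSV (lam : YoungDiagram) (α : List ℕ) : ℕ :=
  Nat.card {e : ℕ × ℕ → Finset ℕ // IsSVT α lam e}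



/-! ## Coefficient series of affine Grothendieck polynomials and dual k-Schur functions -/

/-- The coefficient of `m_ν` in the affine Grothendieck polynomial
`G^{(k)}_λ = Σ_{μ ∈ 𝒫^k} (-1)^{|λ|+|μ|} 𝒦^{(k)}_{λμ} m_μ`
(a degree-wise finite formal series in the monomial symmetric functions). -/
noncomputable def Gcoeff (k : ℕ) (lam ν : YoungDiagram) : ℤ :=
  if IsKBounded k ν then (-1) ^ (lam.card + ν.card) * (Kcal k lam ν.rowLens : ℤ) else 0

/-- The coefficient of `m_ν` in the dual `k`-Schur function
`𝔖^{(k)}_λ = Σ_{μ ∈ 𝒫^k} K^{(k)}_{λμ} m_μ`. -/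
noncomputable def dualKSchurCoeff (k : ℕ) (lam ν : YoungDiagram) : ℤ :=
  if IsKBounded k ν then (Kktab k lam ν.rowLens : ℤ) else 0

/-- `blockOf α y = x` when `y ∈ 𝒜_{α,x}`: the map replacing each letter of `𝒜_{α,x}` by `x`. -/
noncomputable def blockOf (α : List ℕ) (y : ℕ) : ℕ :=
  sInf {x : ℕ | y ≤ (α.take x).sum}

section Aux

/-- monotonicity of prefix sums -/
lemma takesum_mono (μ : List ℕ) {m n : ℕ} (h : m ≤ n) :
    (μ.take m).sum ≤ (μ.take n).sum := by
  have : μ.take m = (μ.take n).take m := by rw [List.take_take, Nat.min_eq_left h]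
  rw [this]
  conv_rhs => rw [← List.take_append_drop m (μ.take n)]
  rw [List.sum_append]
  exact Nat.le_add_right _ _

lemma takesum_le_sum (μ : List ℕ) (m : ℕ) : (μ.take m).sum ≤ μ.sum := by
  conv_rhs => rw [← List.take_append_drop m μ]
  rw [List.sum_append]; exact Nat.le_add_right _ _

lemma takesum_succ (μ : List ℕ) {x : ℕ} (h1 : 1 ≤ x) (h2 : x ≤ μ.length) :
    (μ.take x).sum = (μ.take (x-1)).sum + μ.getD (x-1) 0 := by
  obtain ⟨y, rfl⟩ := Nat.exists_eq_add_of_le h1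
  simp only [Nat.add_sub_cancel_left] at *
  rw [Nat.add_comm 1 y, List.take_succ, List.sum_append]
  simp [List.getD_eq_getElem?_getD, List.getElem?_eq_getElem (by omega : y < μ.length)]

lemma mem_alphaBlock_iff {μ : List ℕ} {x y : ℕ} :
    y ∈ alphaBlock μ x ↔ (μ.take (x-1)).sum < y ∧ y ≤ (μ.take x).sum := by
  simp [alphaBlock]

lemma blockOf_eq {μ : List ℕ} {x y : ℕ} (h : y ∈ alphaBlock μ x) : blockOf μ y = x := by
  rw [mem_alphaBlock_iff] at h
  have hx : x ∈ {z : ℕ | y ≤ (μ.take z).sum} := h.2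
  refine le_antisymm (Nat.sInf_le hx) ?_
  by_contra hlt
  push_neg at hlt
  have hmem := Nat.sInf_mem ⟨x, hx⟩
  have : (μ.take (blockOf μ y)).sum ≤ (μ.take (x-1)).sum := takesum_mono μ (by omega)
  have h3 : y ≤ (μ.take (blockOf μ y)).sum := hmem
  omega

lemma mem_alphaBlock_blockOf {μ : List ℕ} {y : ℕ} (h1 : 1 ≤ y) (h2 : y ≤ μ.sum) :
    y ∈ alphaBlock μ (blockOf μ y) ∧ 1 ≤ blockOf μ y ∧ blockOf μ y ≤ μ.length := by
  have hne : μ.length ∈ {z : ℕ | y ≤ (μ.take z).sum} := by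
    simp only [Set.mem_setOf_eq, List.take_length]; exact h2
  have hmem : y ≤ (μ.take (blockOf μ y)).sum := Nat.sInf_mem ⟨_, hne⟩
  have hle : blockOf μ y ≤ μ.length := Nat.sInf_le hne
  have hpos : 1 ≤ blockOf μ y := by
    rcases Nat.eq_zero_or_pos (blockOf μ y) with h | h
    · exfalso; rw [h] at hmem; simp at hmem; omega
    · exact h
  have hlt : (μ.take (blockOf μ y - 1)).sum < y := by
    by_contra hc
    push_neg at hc
    have : blockOf μ y - 1 ∈ {z : ℕ | y ≤ (μ.take z).sum} := hc
    have h4 : blockOf μ y ≤ blockOf μ y - 1 := Nat.sInf_le this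
    omega
  exact ⟨mem_alphaBlock_iff.2 ⟨hlt, hmem⟩, hpos, hle⟩

lemma blockOf_mono {μ : List ℕ} {y z : ℕ} (h : y ≤ z) (hz : z ≤ μ.sum) :
    blockOf μ y ≤ blockOf μ z := by
  have hne : μ.length ∈ {w : ℕ | z ≤ (μ.take w).sum} := by
    simp only [Set.mem_setOf_eq, List.take_length]; exact hz
  have hmem : z ≤ (μ.take (blockOf μ z)).sum := Nat.sInf_mem ⟨_, hne⟩
  exact Nat.sInf_le (le_trans h hmem)

lemma alphaBlock_card {μ : List ℕ} {x : ℕ} (h1 : 1 ≤ x) (h2 : x ≤ μ.length) :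
    (alphaBlock μ x).card = μ.getD (x-1) 0 := by
  rw [alphaBlock, Nat.card_Ioc, takesum_succ μ h1 h2]; omega

end Aux
section Geom

variable {k : ℕ} {lam : YoungDiagram}

lemma hookLen_le_of_hhook (hhook : lam.rowLen 0 + lam.colLen 0 ≤ k + 1)
    {c : ℕ × ℕ} (hc : c ∈ lam) : hookLen lam c.1 c.2 ≤ k := by
  obtain ⟨r, j⟩ := c
  have h1 : j < lam.rowLen r := YoungDiagram.mem_iff_lt_rowLen.1 hc
  have h2 : r < lam.colLen j := YoungDiagram.mem_iff_lt_colLen.1 hc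
  have h3 : lam.rowLen r ≤ lam.rowLen 0 := lam.rowLen_anti 0 r (Nat.zero_le r)
  have h4 : lam.colLen j ≤ lam.colLen 0 := lam.colLen_anti 0 j (Nat.zero_le j)
  simp only [hookLen]
  omega

lemma pRow_eq_rowLen_row (γ : YoungDiagram) (i : ℕ)
    (h : ∀ j < γ.rowLen i, hookLen γ i j ≤ k) : pRow k γ i = γ.rowLen i := by
  unfold pRow
  rw [γ.rowLen_eq_card (i := i), YoungDiagram.row]
  congr 1
  apply Finset.filter_congr
  intro c hc
  simp only [YoungDiagram.mem_cells] at hc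
  constructor
  · rintro ⟨h1, _⟩; exact h1
  · rintro h1
    refine ⟨h1, ?_⟩
    obtain ⟨r, j⟩ := c
    cases h1
    exact h j (YoungDiagram.mem_iff_lt_rowLen.1 hc)

lemma residue_inj (hhook : lam.rowLen 0 + lam.colLen 0 ≤ k + 1)
    {c d : ℕ × ℕ} (hc : c ∈ lam) (hd : d ∈ lam)
    (hres : residue k c = residue k d) : (c.2 : ℤ) - c.1 = (d.2 : ℤ) - d.1 := by
  have hdvd : ((k : ℤ) + 1) ∣ (((c.2 : ℤ) - c.1) - ((d.2 : ℤ) - d.1)) := by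
    have : ((((c.2 : ℤ) - c.1) - ((d.2 : ℤ) - d.1) : ℤ) : ZMod (k+1)) = 0 := by
      push_cast
      rw [show ((c.2 : ZMod (k+1)) - c.1) = residue k c from rfl,
        show ((d.2 : ZMod (k+1)) - d.1) = residue k d from rfl, hres]
      ring
    have := (ZMod.intCast_zmod_eq_zero_iff_dvd _ _).1 this
    exact_mod_cast this
  have h1 : c.2 < lam.rowLen 0 := lt_of_lt_of_le
    (YoungDiagram.mem_iff_lt_rowLen.1 (show (c.1, c.2) ∈ lam from hc))
    (lam.rowLen_anti 0 c.1 (Nat.zero_le _))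
  have h2 : c.1 < lam.colLen 0 := lt_of_lt_of_le
    (YoungDiagram.mem_iff_lt_colLen.1 (show (c.1, c.2) ∈ lam from hc))
    (lam.colLen_anti 0 c.2 (Nat.zero_le _))
  have h3 : d.2 < lam.rowLen 0 := lt_of_lt_of_le
    (YoungDiagram.mem_iff_lt_rowLen.1 (show (d.1, d.2) ∈ lam from hd))
    (lam.rowLen_anti 0 d.1 (Nat.zero_le _))
  have h4 : d.1 < lam.colLen 0 := lt_of_lt_of_le
    (YoungDiagram.mem_iff_lt_colLen.1 (show (d.1, d.2) ∈ lam from hd))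
    (lam.colLen_anti 0 d.2 (Nat.zero_le _))
  have := Int.eq_zero_of_abs_lt_dvd hdvd (by
    rw [abs_lt]
    constructor <;> [skip; skip] <;> omega)
  omega

lemma rowLen_mono_sub {δ : YoungDiagram} (hsub : ∀ c ∈ δ, c ∈ lam) (r : ℕ) :
    δ.rowLen r ≤ lam.rowLen r := by
  by_contra h
  push_neg at h
  exact lt_irrefl _ (YoungDiagram.mem_iff_lt_rowLen.1
    (hsub _ (YoungDiagram.mem_iff_lt_rowLen.2 h)))

lemma colLen_mono_sub {δ : YoungDiagram} (hsub : ∀ c ∈ δ, c ∈ lam) (j : ℕ) :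
    δ.colLen j ≤ lam.colLen j := by
  by_contra h
  push_neg at h
  exact lt_irrefl _ (YoungDiagram.mem_iff_lt_colLen.1
    (hsub _ (YoungDiagram.mem_iff_lt_colLen.2 h)))

lemma subdiag_core (hhook : lam.rowLen 0 + lam.colLen 0 ≤ k + 1)
    {δ : YoungDiagram} (hsub : ∀ c ∈ δ, c ∈ lam) : IsCore (k+1) δ := by
  intro c hc
  have h0 : hookLen lam c.1 c.2 ≤ k := hookLen_le_of_hhook hhook (hsub c hc)
  have h1 : c.2 < δ.rowLen c.1 := YoungDiagram.mem_iff_lt_rowLen.1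
    (show (c.1, c.2) ∈ δ from hc)
  have h2 : c.1 < δ.colLen c.2 := YoungDiagram.mem_iff_lt_colLen.1
    (show (c.1, c.2) ∈ δ from hc)
  have h3 := rowLen_mono_sub hsub c.1
  have h4 := colLen_mono_sub hsub c.2
  simp only [hookLen] at h0 ⊢
  omega

lemma corner_unique (hhook : lam.rowLen 0 + lam.colLen 0 ≤ k + 1)
    {δ : YoungDiagram} (hsub : ∀ c ∈ δ, c ∈ lam) {c d : ℕ × ℕ}
    (hc : Removable δ c) (hd : Removable δ d)
    (hres : residue k c = residue k d) : c = d := by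
  have hdiag := residue_inj hhook (hsub _ hc.1) (hsub _ hd.1) hres
  rcases lt_trichotomy c.1 d.1 with h | h | h
  · exfalso
    have hc2 : c.2 < d.2 := by omega
    exact hc.2.1 (δ.up_left_mem (by omega) (by omega) (show (d.1, d.2) ∈ δ from hd.1))
  · have : c.2 = d.2 := by omega
    exact Prod.ext h this
  · exfalso
    have hc2 : d.2 < c.2 := by omega
    exact hd.2.1 (δ.up_left_mem (by omega) (by omega) (show (c.1, c.2) ∈ δ from hc.1))

end Geom
section CoreEq

variable {k : ℕ} {lam : YoungDiagram}

lemma core_eq_self (hhook : lam.rowLen 0 + lam.colLen 0 ≤ k + 1)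
    {γ : YoungDiagram} (hcore : IsCore (k+1) γ)
    (hp : ∀ i, pRow k γ i = lam.rowLen i) : γ = lam := by
  have key : ∀ N i, γ.colLen 0 ≤ i + N → ∀ j < γ.rowLen i, hookLen γ i j ≤ k := by
    intro N
    induction N with
    | zero =>
      intro i hi j hj
      exfalso
      have hmem : (i, j) ∈ γ := YoungDiagram.mem_iff_lt_rowLen.2 hj
      have : (i, 0) ∈ γ := γ.up_left_mem le_rfl (Nat.zero_le _) hmem
      have := YoungDiagram.mem_iff_lt_colLen.1 this
      omega
    | succ N ih =>
      intro i hi j hj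
      by_contra hbad
      push_neg at hbad
      -- the set of "bad" columns in row i
      have hSne : j ∈ (Finset.range (γ.rowLen i)).filter
          (fun j' => k+2 ≤ hookLen γ i j') := by
        have hne : hookLen γ i j ≠ k+1 := hcore (i, j) (YoungDiagram.mem_iff_lt_rowLen.2 hj)
        simp only [Finset.mem_filter, Finset.mem_range]
        exact ⟨hj, by omega⟩
      set S := (Finset.range (γ.rowLen i)).filter (fun j' => k+2 ≤ hookLen γ i j')
        with hS
      have hSne' : S.Nonempty := ⟨j, hSne⟩
      set j0 := S.max' hSne' with hj0
      have hj0S : j0 ∈ S := S.max'_mem hSne'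
      simp only [hS, Finset.mem_filter, Finset.mem_range] at hj0S
      obtain ⟨hj0lt, hj0hook⟩ := hj0S
      have hmem0 : (i, j0) ∈ γ := YoungDiagram.mem_iff_lt_rowLen.2 hj0lt
      have hiC : i < γ.colLen j0 := YoungDiagram.mem_iff_lt_colLen.1 hmem0
      set R := γ.rowLen i with hR
      set C := γ.colLen j0 with hC
      -- cells strictly to the right of j0 have small hooks
      have hright : ∀ j', j0 < j' → j' < R → hookLen γ i j' ≤ k := by
        intro j' h1 h2
        have hnotin : ¬ (k+2 ≤ hookLen γ i j') := by
          intro hcon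
          have : j' ∈ S := by
            simp only [hS, Finset.mem_filter, Finset.mem_range]; exact ⟨h2, hcon⟩
          have := S.le_max' j' this
          omega
        have : hookLen γ i j' ≠ k+1 := hcore (i, j') (YoungDiagram.mem_iff_lt_rowLen.2 h2)
        omega
      -- a lower bound on pRow k γ i
      have claim1 : R - j0 - 1 ≤ pRow k γ i := by
        have hsubset : (Finset.Ioo j0 R).image (fun j' => (i, j')) ⊆
            γ.cells.filter (fun c => c.1 = i ∧ hookLen γ c.1 c.2 ≤ k) := by
          intro c hcmem
          simp only [Finset.mem_image, Finset.mem_Ioo] at hcmem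
          obtain ⟨j', ⟨hl, hr⟩, rfl⟩ := hcmem
          simp only [Finset.mem_filter, YoungDiagram.mem_cells]
          exact ⟨YoungDiagram.mem_iff_lt_rowLen.2 hr, trivial, hright j' hl hr⟩
        have hcard : ((Finset.Ioo j0 R).image (fun j' => (i, j'))).card = R - j0 - 1 := by
          rw [Finset.card_image_of_injective _ (fun a b h => by
            simpa using h), Nat.card_Ioo]
        calc R - j0 - 1 = ((Finset.Ioo j0 R).image (fun j' => (i, j'))).card := hcard.symm
          _ ≤ _ := Finset.card_le_card hsubset
      rw [hp i] at claim1
      -- rows above i are all good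
      have habove : ∀ i', i < i' → ∀ j' < γ.rowLen i', hookLen γ i' j' ≤ k := by
        intro i' hii' j' hj'
        exact ih i' (by omega) j' hj'
      -- hook inequality
      have hhookeq : (R - j0) + (C - i) - 1 = hookLen γ i j0 := rfl
      have hab : (R - j0 - 1) + (C - i - 1) ≥ k + 1 := by omega
      -- bound colLen lam 0
      have claim2 : 1 ≤ C - i - 1 → C ≤ lam.colLen 0 := by
        intro hb
        have hi0 : (C - 1, j0) ∈ γ := YoungDiagram.mem_iff_lt_colLen.2 (by omega)
        have hrl : 1 ≤ γ.rowLen (C-1) := by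
          have := YoungDiagram.mem_iff_lt_rowLen.1 hi0
          omega
        have hpe : pRow k γ (C-1) = γ.rowLen (C-1) :=
          pRow_eq_rowLen_row γ (C-1) (habove (C-1) (by omega))
        have : 1 ≤ lam.rowLen (C-1) := by rw [← hp (C-1), hpe]; exact hrl
        have : (C-1, 0) ∈ lam := YoungDiagram.mem_iff_lt_rowLen.2 (by omega)
        have := YoungDiagram.mem_iff_lt_colLen.1 this
        omega
      have claim3 : lam.rowLen i ≤ lam.rowLen 0 := lam.rowLen_anti 0 i (Nat.zero_le _)
      rcases Nat.eq_zero_or_pos (C - i - 1) with hb0 | hb1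
      · -- b = 0 : a ≥ k+1
        have ha : k + 1 ≤ R - j0 - 1 := by omega
        have : 1 ≤ lam.rowLen i := by omega
        have : (i, 0) ∈ lam := YoungDiagram.mem_iff_lt_rowLen.2 (by omega)
        have := YoungDiagram.mem_iff_lt_colLen.1 this
        omega
      · have := claim2 hb1
        omega
  have hall : ∀ i j, j < γ.rowLen i → hookLen γ i j ≤ k := by
    intro i
    exact key (γ.colLen 0) i (by omega)
  have hrow : ∀ i, γ.rowLen i = lam.rowLen i := by
    intro i
    rw [← hp i, pRow_eq_rowLen_row γ i (hall i)]
  ext c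
  obtain ⟨r, j⟩ := c
  simp only [YoungDiagram.mem_cells, YoungDiagram.mem_iff_lt_rowLen, hrow]

lemma lam_is_core (hhook : lam.rowLen 0 + lam.colLen 0 ≤ k + 1) :
    IsCore (k+1) lam ∧ ∀ i, pRow k lam i = lam.rowLen i := by
  constructor
  · intro c hc
    have := hookLen_le_of_hhook hhook hc
    omega
  · intro i
    apply pRow_eq_rowLen_row
    intro j hj
    exact hookLen_le_of_hhook hhook (YoungDiagram.mem_iff_lt_rowLen.2 hj)

lemma coreOf_eq_self (hhook : lam.rowLen 0 + lam.colLen 0 ≤ k + 1) :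
    coreOf k lam = lam := by
  have hex : ∃ γ : YoungDiagram, IsCore (k+1) γ ∧ ∀ i, pRow k γ i = lam.rowLen i :=
    ⟨lam, lam_is_core hhook⟩
  have := Classical.epsilon_spec hex
  exact core_eq_self hhook this.1 this.2

end CoreEq
section Chain

variable {lam : YoungDiagram} {e : ℕ × ℕ → Finset ℕ}

lemma svf_cell (hf : IsSVFilling lam e) {c : ℕ × ℕ} {x : ℕ} (hx : x ∈ e c) : c ∈ lam :=
  (hf.1 c).2 ⟨x, hx⟩

lemma svf_nonempty (hf : IsSVFilling lam e) {c : ℕ × ℕ} (hc : c ∈ lam) : (e c).Nonempty :=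
  (hf.1 c).1 hc

lemma svf_row_all (hf : IsSVFilling lam e) :
    ∀ n r c, (r, c + n + 1) ∈ lam →
      ∀ w ∈ e (r, c), ∀ z ∈ e (r, c + n + 1), w ≤ z := by
  intro n
  induction n with
  | zero => intro r c _ w hw z hz; exact hf.2.2.2 r c w hw z hz
  | succ n ih =>
    intro r c hmem w hw z hz
    have hm : (r, c + n + 1) ∈ lam := lam.up_left_mem le_rfl (by omega) hmem
    obtain ⟨u, hu⟩ := svf_nonempty hf hm
    have h1 : w ≤ u := ih r c hm w hw u hu
    have h2 : u ≤ z := hf.2.2.2 r (c + n + 1) u hu z (by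
      have : c + (n + 1) + 1 = c + n + 1 + 1 := by omega
      rwa [this] at hz)
    omega

lemma svf_col_all (hf : IsSVFilling lam e) :
    ∀ n r c, (r + n + 1, c) ∈ lam →
      ∀ w ∈ e (r, c), ∀ z ∈ e (r + n + 1, c), w < z := by
  intro n
  induction n with
  | zero => intro r c _ w hw z hz; exact hf.2.2.1 r c w hw z hz
  | succ n ih =>
    intro r c hmem w hw z hz
    have hm : (r + n + 1, c) ∈ lam := lam.up_left_mem (by omega) le_rfl hmem
    obtain ⟨u, hu⟩ := svf_nonempty hf hm
    have h1 : w < u := ih r c hm w hw u hu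
    have h2 : u < z := hf.2.2.1 (r + n + 1) c u hu z (by
      have : r + (n + 1) + 1 = r + n + 1 + 1 := by omega
      rwa [this] at hz)
    omega

/-- The fundamental chain lemma: letters weakly increase to the south-east,
strictly down rows. -/
lemma svf_chain (hf : IsSVFilling lam e) {d c : ℕ × ℕ} (hne : d ≠ c)
    (h1 : d.1 ≤ c.1) (h2 : d.2 ≤ c.2) (hc : c ∈ lam)
    {w z : ℕ} (hw : w ∈ e d) (hz : z ∈ e c) :
    w ≤ z ∧ (d.1 < c.1 → w < z) := by
  obtain ⟨r', c'⟩ := d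
  obtain ⟨r, cc⟩ := c
  simp only at h1 h2 ⊢
  rcases eq_or_lt_of_le h1 with h | h
  · subst h
    have hcc : c' < cc := by
      rcases eq_or_lt_of_le h2 with h | h
      · exact absurd (by rw [h]) hne
      · exact h
    obtain ⟨m, rfl⟩ : ∃ m, cc = c' + m + 1 := ⟨cc - c' - 1, by omega⟩
    exact ⟨svf_row_all hf m r' c' hc w hw z hz, fun h => (Nat.lt_irrefl _ h).elim⟩
  · have hm : (r', cc) ∈ lam := lam.up_left_mem (by omega) le_rfl hc
    have hwu : ∃ u ∈ e (r', cc), w ≤ u := by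
      rcases eq_or_lt_of_le h2 with h' | h'
      · subst h'
        exact ⟨w, hw, le_rfl⟩
      · obtain ⟨m, rfl⟩ : ∃ m, cc = c' + m + 1 := ⟨cc - c' - 1, by omega⟩
        obtain ⟨u, hu⟩ := svf_nonempty hf hm
        exact ⟨u, hu, svf_row_all hf m r' c' hm w hw u hu⟩
    obtain ⟨u, hu, hwu'⟩ := hwu
    obtain ⟨m, rfl⟩ : ∃ m, r = r' + m + 1 := ⟨r - r' - 1, by omega⟩
    have := svf_col_all hf m r' cc hc u hu z hz
    exact ⟨by omega, fun _ => by omega⟩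

/-- The prefix shape `T_{≤x}` is a lower set, hence a Young diagram. -/
lemma shapeLe_lowerSet (hf : IsSVFilling lam e) (x : ℕ) :
    IsLowerSet ((shapeLe lam e x : Finset (ℕ × ℕ)) : Set (ℕ × ℕ)) := by
  intro c d hdc hc
  simp only [Finset.coe_filter, Set.mem_setOf_eq, shapeLe, YoungDiagram.mem_cells] at hc ⊢
  obtain ⟨hclam, z, hz, hzx⟩ := hc
  have hdlam : d ∈ lam := lam.isLowerSet hdc hclam
  refine ⟨hdlam, ?_⟩
  by_cases hdc' : d = c
  · subst hdc'; exact ⟨z, hz, hzx⟩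
  · obtain ⟨w, hw⟩ := svf_nonempty hf hdlam
    have := svf_chain hf hdc' hdc.1 hdc.2 hclam hw hz
    exact ⟨w, hw, by omega⟩

/-- The Young diagram whose cells are `T_{≤x}`. -/
noncomputable def mkShape (hf : IsSVFilling lam e) (x : ℕ) : YoungDiagram :=
  ⟨shapeLe lam e x, shapeLe_lowerSet hf x⟩

lemma mkShape_cells (hf : IsSVFilling lam e) (x : ℕ) :
    (mkShape hf x).cells = shapeLe lam e x := rfl

lemma mem_mkShape (hf : IsSVFilling lam e) {x : ℕ} {c : ℕ × ℕ} :
    c ∈ mkShape hf x ↔ c ∈ lam ∧ ∃ z ∈ e c, z ≤ x := by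
  show c ∈ shapeLe lam e x ↔ _
  simp [shapeLe]

lemma mkShape_sub (hf : IsSVFilling lam e) (x : ℕ) :
    ∀ c ∈ mkShape hf x, c ∈ lam := fun c hc => ((mem_mkShape hf).1 hc).1

end Chain
section Strip

variable {lam : YoungDiagram} {e : ℕ × ℕ → Finset ℕ}

/-- If the cells containing letters from an interval block form a horizontal strip,
then no such cell is weakly south-east of another. -/
lemma strip_no_se (hf : IsSVFilling lam e) {s t : ℕ}
    (hstrip : ∀ c d : ℕ × ℕ, (∃ y ∈ Finset.Ioc s t, y ∈ e c) →
      (∃ y ∈ Finset.Ioc s t, y ∈ e d) → c.2 = d.2 → c = d)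
    {a b : ℕ} (ha : a ∈ Finset.Ioc s t) (hb : b ∈ Finset.Ioc s t)
    {c₀ c₁ : ℕ × ℕ} (hac : a ∈ e c₀) (hbc : b ∈ e c₁)
    (hr : c₀.1 < c₁.1) (hcc : c₀.2 ≤ c₁.2) : False := by
  rcases eq_or_lt_of_le hcc with hcol | hcol
  · have := hstrip c₀ c₁ ⟨a, ha, hac⟩ ⟨b, hb, hbc⟩ hcol
    rw [this] at hr
    exact Nat.lt_irrefl _ hr
  · have hc1lam : c₁ ∈ lam := svf_cell hf hbc
    have hmlam : (c₀.1 + 1, c₀.2) ∈ lam := by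
      exact lam.up_left_mem (show c₀.1 + 1 ≤ c₁.1 by omega)
        (show c₀.2 ≤ c₁.2 by omega) (show (c₁.1, c₁.2) ∈ lam from hc1lam)
    obtain ⟨w, hw⟩ := svf_nonempty hf hmlam
    have haw : a < w := by
      have := hf.2.2.1 c₀.1 c₀.2 a (show a ∈ e (c₀.1, c₀.2) from hac) w hw
      exact this
    have hwb : w ≤ b := by
      have hne : (c₀.1 + 1, c₀.2) ≠ c₁ := by
        intro hcon
        rw [← hcon] at hcol
        simp at hcol
      exact (svf_chain hf hne (by omega) (by omega) hc1lam hw hbc).1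
    simp only [Finset.mem_Ioc] at ha hb
    have hwS : w ∈ Finset.Ioc s t := Finset.mem_Ioc.2 ⟨by omega, by omega⟩
    have := hstrip c₀ (c₀.1 + 1, c₀.2) ⟨a, Finset.mem_Ioc.2 ⟨ha.1, ha.2⟩, hac⟩
      ⟨w, hwS, hw⟩ rfl
    have : c₀.1 = c₀.1 + 1 := congrArg Prod.fst this
    omega

/-- Residues are injective on the cells containing letters of an interval block. -/
lemma strip_residue_injOn {k : ℕ} (hf : IsSVFilling lam e)
    (hhook : lam.rowLen 0 + lam.colLen 0 ≤ k + 1) {s t : ℕ}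
    (hstrip : ∀ c d : ℕ × ℕ, (∃ y ∈ Finset.Ioc s t, y ∈ e c) →
      (∃ y ∈ Finset.Ioc s t, y ∈ e d) → c.2 = d.2 → c = d)
    {c d : ℕ × ℕ} (hc : ∃ y ∈ Finset.Ioc s t, y ∈ e c)
    (hd : ∃ y ∈ Finset.Ioc s t, y ∈ e d)
    (hres : residue k c = residue k d) : c = d := by
  obtain ⟨a, haS, hac⟩ := hc
  obtain ⟨b, hbS, hbd⟩ := hd
  have hclam : c ∈ lam := svf_cell hf hac
  have hdlam : d ∈ lam := svf_cell hf hbd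
  have hdiag := residue_inj hhook hclam hdlam hres
  rcases lt_trichotomy c.1 d.1 with h | h | h
  · exact absurd (strip_no_se hf hstrip haS hbS hac hbd h (by omega)) not_false
  · have : c.2 = d.2 := by omega
    exact hstrip c d ⟨a, haS, hac⟩ ⟨b, hbS, hbd⟩ this
  · exact absurd (strip_no_se hf hstrip hbS haS hbd hac h (by omega)) not_false

end Strip
section Stdz

/-- The set of cells containing the letter `x`. -/
noncomputable def occ (lam : YoungDiagram) (e : ℕ × ℕ → Finset ℕ) (x : ℕ) : Finset (ℕ × ℕ) :=
  lam.cells.filter (fun d => x ∈ e d)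

/-- The column rank of a cell among the cells containing `x`. -/
noncomputable def rnk (lam : YoungDiagram) (e : ℕ × ℕ → Finset ℕ) (x : ℕ) (c : ℕ × ℕ) : ℕ :=
  ((occ lam e x).filter (fun d => d.2 < c.2)).card

/-- The standardization of the letter `x` at cell `c`. -/
noncomputable def fstd (μ : List ℕ) (lam : YoungDiagram) (e : ℕ × ℕ → Finset ℕ)
    (x : ℕ) (c : ℕ × ℕ) : ℕ :=
  (μ.take (x-1)).sum + rnk lam e x c + 1

/-- The standardization of a set-valued tableau. -/
noncomputable def stdz (μ : List ℕ) (lam : YoungDiagram) (e : ℕ × ℕ → Finset ℕ)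
    (c : ℕ × ℕ) : Finset ℕ :=
  (e c).image (fun x => fstd μ lam e x c)

variable {k : ℕ} {lam : YoungDiagram} {μ : List ℕ} {e : ℕ × ℕ → Finset ℕ}

lemma mem_occ (hf : IsSVFilling lam e) {x : ℕ} {d : ℕ × ℕ} :
    d ∈ occ lam e x ↔ x ∈ e d := by
  simp only [occ, Finset.mem_filter, YoungDiagram.mem_cells]
  exact ⟨fun h => h.2, fun h => ⟨svf_cell hf h, h⟩⟩

lemma hstrip_single (hf : IsSVFilling lam e) {x : ℕ} {c d : ℕ × ℕ}
    (hc : x ∈ e c) (hd : x ∈ e d) (hcd : c.2 = d.2) : c = d := by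
  rcases lt_trichotomy c.1 d.1 with h | h | h
  · have := (svf_chain hf (fun hcon => by subst hcon; omega) (by omega) (by omega)
      (svf_cell hf hd) hc hd).2 h
    omega
  · exact Prod.ext h hcd
  · have := (svf_chain hf (fun hcon => by subst hcon; omega) (by omega) (by omega)
      (svf_cell hf hc) hd hc).2 h
    omega

lemma occ_nose (hf : IsSVFilling lam e) {x : ℕ} {c d : ℕ × ℕ}
    (hc : x ∈ e c) (hd : x ∈ e d) (h : c.1 < d.1) : d.2 < c.2 := by
  by_contra hcon
  push_neg at hcon
  have := (svf_chain hf (fun hcon' => by subst hcon'; omega) (by omega) hcon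
    (svf_cell hf hd) hc hd).2 h
  omega

lemma rnk_lt_card (hf : IsSVFilling lam e) {x : ℕ} {c : ℕ × ℕ} (hc : x ∈ e c) :
    rnk lam e x c < (occ lam e x).card := by
  apply Finset.card_lt_card
  rw [Finset.ssubset_iff_of_subset (Finset.filter_subset _ _)]
  exact ⟨c, (mem_occ hf).2 hc, by simp⟩

lemma rnk_strict_mono (hf : IsSVFilling lam e) {x : ℕ} {c d : ℕ × ℕ}
    (hc : x ∈ e c) (hd : x ∈ e d) (h : c.2 < d.2) :
    rnk lam e x c < rnk lam e x d := by
  apply Finset.card_lt_card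
  rw [Finset.ssubset_iff_of_subset]
  · exact ⟨c, by
      simp only [Finset.mem_filter]
      exact ⟨(mem_occ hf).2 hc, h⟩, by simp⟩
  · intro a ha
    simp only [Finset.mem_filter] at ha ⊢
    exact ⟨ha.1, by omega⟩

lemma rnk_inj (hf : IsSVFilling lam e) {x : ℕ} {c d : ℕ × ℕ}
    (hc : x ∈ e c) (hd : x ∈ e d) (h : rnk lam e x c = rnk lam e x d) : c = d := by
  rcases lt_trichotomy c.2 d.2 with h' | h' | h'
  · have := rnk_strict_mono hf hc hd h'; omega
  · exact hstrip_single hf hc hd h'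
  · have := rnk_strict_mono hf hd hc h'; omega

lemma rnk_surj (hf : IsSVFilling lam e) {x : ℕ} {r : ℕ}
    (hr : r < (occ lam e x).card) : ∃ c, x ∈ e c ∧ rnk lam e x c = r := by
  have := Finset.surj_on_of_inj_on_of_card_le
    (s := occ lam e x) (t := Finset.range ((occ lam e x).card))
    (fun c _ => rnk lam e x c)
    (fun c hc => Finset.mem_range.2 (rnk_lt_card hf ((mem_occ hf).1 hc)))
    (fun c d hc hd hcd => rnk_inj hf ((mem_occ hf).1 hc) ((mem_occ hf).1 hd) hcd)
    (by rw [Finset.card_range])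
    r (Finset.mem_range.2 hr)
  obtain ⟨c, hc, hrc⟩ := this
  exact ⟨c, (mem_occ hf).1 hc, hrc.symm⟩

lemma fstd_mem_block (hsvt : IsSVT μ lam e) {x : ℕ} {c : ℕ × ℕ}
    (hx1 : 1 ≤ x) (hx2 : x ≤ μ.length) (hc : x ∈ e c) :
    fstd μ lam e x c ∈ alphaBlock μ x := by
  rw [mem_alphaBlock_iff]
  have h1 := rnk_lt_card hsvt.1 hc
  have hcard : (occ lam e x).card = μ.getD (x-1) 0 := hsvt.2.2 x hx1 hx2
  rw [hcard] at h1
  rw [takesum_succ μ hx1 hx2]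
  simp only [fstd]
  omega

lemma letter_bounds (hsvt : IsSVT μ lam e) {x : ℕ} {c : ℕ × ℕ} (hc : x ∈ e c) :
    1 ≤ x ∧ x ≤ μ.length :=
  ⟨hsvt.1.2.1 c x hc, hsvt.2.1 c x hc⟩

lemma mem_stdz {c : ℕ × ℕ} {y : ℕ} :
    y ∈ stdz μ lam e c ↔ ∃ x ∈ e c, fstd μ lam e x c = y := by
  simp [stdz]

lemma stdz_block_eq (hsvt : IsSVT μ lam e) {y : ℕ} {x : ℕ} {c : ℕ × ℕ}
    (hy : y ∈ stdz μ lam e c) (hyB : y ∈ alphaBlock μ x) :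
    x ∈ e c ∧ fstd μ lam e x c = y := by
  obtain ⟨x', hx', hfx'⟩ := mem_stdz.1 hy
  obtain ⟨h1, h2⟩ := letter_bounds hsvt hx'
  have : y ∈ alphaBlock μ x' := hfx' ▸ fstd_mem_block hsvt h1 h2 hx'
  have hxx : x' = x := by rw [← blockOf_eq this, ← blockOf_eq hyB]
  subst hxx
  exact ⟨hx', hfx'⟩

/-- Characterization of the cells containing letters of the `x`-th block. -/
lemma stdz_block_cells (hsvt : IsSVT μ lam e) {x : ℕ} {c : ℕ × ℕ}
    (hx1 : 1 ≤ x) (hx2 : x ≤ μ.length) :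
    (∃ y ∈ alphaBlock μ x, y ∈ stdz μ lam e c) ↔ x ∈ e c := by
  constructor
  · rintro ⟨y, hyB, hy⟩
    exact (stdz_block_eq hsvt hy hyB).1
  · intro hc
    exact ⟨fstd μ lam e x c, fstd_mem_block hsvt hx1 hx2 hc, mem_stdz.2 ⟨x, hc, rfl⟩⟩

lemma stdz_svf (hsvt : IsSVT μ lam e) : IsSVFilling lam (stdz μ lam e) := by
  obtain ⟨hf, hbd, hwt⟩ := hsvt
  refine ⟨?_, ?_, ?_, ?_⟩
  · intro c
    rw [hf.1 c]
    constructor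
    · rintro ⟨x, hx⟩; exact ⟨fstd μ lam e x c, mem_stdz.2 ⟨x, hx, rfl⟩⟩
    · rintro ⟨y, hy⟩
      obtain ⟨x, hx, _⟩ := mem_stdz.1 hy
      exact ⟨x, hx⟩
  · intro c y hy
    obtain ⟨x, _, rfl⟩ := mem_stdz.1 hy
    simp only [fstd]; omega
  · intro r c u hu z hz
    obtain ⟨x, hx, rfl⟩ := mem_stdz.1 hu
    obtain ⟨x', hx', rfl⟩ := mem_stdz.1 hz
    have hlt : x < x' := hf.2.2.1 r c x hx x' hx'
    have h1 := fstd_mem_block ⟨hf, hbd, hwt⟩ (hf.2.1 _ x hx) (hbd _ x hx) hx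
    have h2 := fstd_mem_block ⟨hf, hbd, hwt⟩ (hf.2.1 _ x' hx') (hbd _ x' hx') hx'
    rw [mem_alphaBlock_iff] at h1 h2
    have := takesum_mono μ (show x ≤ x' - 1 by omega)
    omega
  · intro r c u hu z hz
    obtain ⟨x, hx, rfl⟩ := mem_stdz.1 hu
    obtain ⟨x', hx', rfl⟩ := mem_stdz.1 hz
    have hle : x ≤ x' := hf.2.2.2 r c x hx x' hx'
    rcases eq_or_lt_of_le hle with h | h
    · subst h
      have := rnk_strict_mono hf hx hx' (show (r,c).2 < (r,c+1).2 by simp)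
      simp only [fstd]; omega
    · have h1 := fstd_mem_block ⟨hf, hbd, hwt⟩ (hf.2.1 _ x hx) (hbd _ x hx) hx
      have h2 := fstd_mem_block ⟨hf, hbd, hwt⟩ (hf.2.1 _ x' hx') (hbd _ x' hx') hx'
      rw [mem_alphaBlock_iff] at h1 h2
      have := takesum_mono μ (show x ≤ x' - 1 by omega)
      omega

/-- Each standardized letter occurs in exactly one cell. -/
lemma stdz_unique_occ (hsvt : IsSVT μ lam e) {y : ℕ} {c d : ℕ × ℕ}
    (hc : y ∈ stdz μ lam e c) (hd : y ∈ stdz μ lam e d) : c = d := by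
  obtain ⟨x, hx, hfx⟩ := mem_stdz.1 hc
  obtain ⟨h1, h2⟩ := letter_bounds hsvt hx
  have hyB : y ∈ alphaBlock μ x := hfx ▸ fstd_mem_block hsvt h1 h2 hx
  obtain ⟨hx', hfx'⟩ := stdz_block_eq hsvt hd hyB
  apply rnk_inj hsvt.1 hx hx'
  have : fstd μ lam e x c = fstd μ lam e x d := by rw [hfx, hfx']
  simp only [fstd] at this; omega

lemma stdz_exists_occ (hsvt : IsSVT μ lam e) {y : ℕ}
    (h1 : 1 ≤ y) (h2 : y ≤ μ.sum) : ∃ c, y ∈ stdz μ lam e c := by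
  obtain ⟨hyB, hx1, hx2⟩ := mem_alphaBlock_blockOf (μ := μ) h1 h2
  set x := blockOf μ y with hx
  rw [mem_alphaBlock_iff] at hyB
  have hcard : (occ lam e x).card = μ.getD (x-1) 0 := hsvt.2.2 x hx1 hx2
  have hbound : y - (μ.take (x-1)).sum - 1 < (occ lam e x).card := by
    rw [hcard]
    have := takesum_succ μ hx1 hx2
    omega
  obtain ⟨c, hc, hrc⟩ := rnk_surj hsvt.1 hbound
  refine ⟨c, mem_stdz.2 ⟨x, hc, ?_⟩⟩
  simp only [fstd, hrc]
  omega

end Stdz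
section StdzASVT

variable {k : ℕ} {lam : YoungDiagram} {μ : List ℕ} {e : ℕ × ℕ → Finset ℕ}

lemma occ_residue_injOn (hhook : lam.rowLen 0 + lam.colLen 0 ≤ k + 1)
    (hf : IsSVFilling lam e) {x : ℕ} {c d : ℕ × ℕ}
    (hc : x ∈ e c) (hd : x ∈ e d) (hres : residue k c = residue k d) : c = d := by
  have hdiag := residue_inj hhook (svf_cell hf hc) (svf_cell hf hd) hres
  rcases lt_trichotomy c.1 d.1 with h | h | h
  · have := occ_nose hf hc hd h; omega
  · exact Prod.ext h (by omega)
  · have := occ_nose hf hd hc h; omega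

theorem stdz_isASVT (hhook : lam.rowLen 0 + lam.colLen 0 ≤ k + 1)
    (hsvt : IsSVT μ lam e) : IsASVT k μ lam (stdz μ lam e) := by
  have hf := hsvt.1
  have hf' := stdz_svf hsvt
  constructor
  · -- IsStdASVT
    refine ⟨hf', ?_, ?_⟩
    · intro c y hy
      obtain ⟨x, hx, rfl⟩ := mem_stdz.1 hy
      obtain ⟨h1, h2⟩ := letter_bounds hsvt hx
      have := mem_alphaBlock_iff.1 (fstd_mem_block hsvt h1 h2 hx)
      have := takesum_le_sum μ x
      omega
    · intro y hy1 hy2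
      obtain ⟨c, hyc⟩ := stdz_exists_occ hsvt hy1 hy2
      have hremC : Removable (mkShape hf' y) c := by
        refine ⟨(mem_mkShape hf').2 ⟨svf_cell hf' hyc, y, hyc, le_rfl⟩, ?_, ?_⟩
        · intro hmem
          obtain ⟨_, z, hz, hzy⟩ := (mem_mkShape hf').1 hmem
          have : y < z := hf'.2.2.1 c.1 c.2 y hyc z hz
          omega
        · intro hmem
          obtain ⟨_, z, hz, hzy⟩ := (mem_mkShape hf').1 hmem
          obtain ⟨x, hx, hfx⟩ := mem_stdz.1 hyc
          obtain ⟨x', hx', hfx'⟩ := mem_stdz.1 hz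
          obtain ⟨hx1, hx2⟩ := letter_bounds hsvt hx
          obtain ⟨hx1', hx2'⟩ := letter_bounds hsvt hx'
          have hle : x ≤ x' := hf.2.2.2 c.1 c.2 x hx x' hx'
          have hBy := mem_alphaBlock_iff.1 (fstd_mem_block hsvt hx1 hx2 hx)
          have hBz := mem_alphaBlock_iff.1 (fstd_mem_block hsvt hx1' hx2' hx')
          rcases eq_or_lt_of_le hle with h | h
          · subst h
            have := rnk_strict_mono hf hx hx'
              (show (c.1, c.2).2 < (c.1, c.2+1).2 by simp)
            simp only [fstd] at hfx hfx'
            omega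
          · have := takesum_mono μ (show x ≤ x' - 1 by omega)
            rw [hfx] at hBy
            rw [hfx'] at hBz
            omega
      refine ⟨mkShape hf' y, subdiag_core hhook (mkShape_sub hf' y), rfl,
        residue k c, ⟨c, hyc⟩, ?_⟩
      intro c'
      constructor
      · intro hyc'
        have : c' = c := stdz_unique_occ hsvt hyc' hyc
        subst this
        exact ⟨hremC, rfl⟩
      · rintro ⟨hrem, hres⟩
        have : c' = c := corner_unique hhook (mkShape_sub hf' y) hrem hremC hres
        subst this
        exact hyc
  · -- block conditions
    intro x hx1 hx2
    refine ⟨?_, ?_, ?_⟩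
    · intro y z hyB hzB hyz cy cz hcy hcz
      obtain ⟨hxcy, hfy⟩ := stdz_block_eq hsvt hcy.1 hyB
      obtain ⟨hxcz, hfz⟩ := stdz_block_eq hsvt hcz.1 hzB
      have hrlt : rnk lam e x cy < rnk lam e x cz := by
        simp only [fstd] at hfy hfz
        omega
      have hcol : cy.2 < cz.2 := by
        rcases lt_trichotomy cy.2 cz.2 with h | h | h
        · exact h
        · exact absurd (congrArg (rnk lam e x) (hstrip_single hf hxcy hxcz h))
            (by omega)
        · have := rnk_strict_mono hf hxcz hxcy h
          omega
      rcases lt_trichotomy cy.1 cz.1 with h | h | h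
      · have := occ_nose hf hxcy hxcz h
        omega
      · exact Or.inr ⟨h, hcol⟩
      · exact Or.inl h
    · have hfe : lam.cells.filter (fun c => ∃ y ∈ alphaBlock μ x, y ∈ stdz μ lam e c)
          = occ lam e x := by
        apply Finset.filter_congr
        intro c _
        rw [stdz_block_cells hsvt hx1 hx2]
      rw [hfe, Finset.card_image_of_injOn
        (fun c hc d hd hres => occ_residue_injOn hhook hf
          ((mem_occ hf).1 hc) ((mem_occ hf).1 hd) hres)]
      exact hsvt.2.2 x hx1 hx2
    · intro c d hc hd hcol
      obtain ⟨y, hyB, hy⟩ := hc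
      obtain ⟨z, hzB, hz⟩ := hd
      exact hstrip_single hf (stdz_block_eq hsvt hy hyB).1
        (stdz_block_eq hsvt hz hzB).1 hcol

end StdzASVT
section Collapse

/-- Collapsing each standardized letter to its block index. -/
noncomputable def collapse (μ : List ℕ) (e : ℕ × ℕ → Finset ℕ) (c : ℕ × ℕ) : Finset ℕ :=
  (e c).image (blockOf μ)

variable {k n : ℕ} {lam : YoungDiagram} {μ : List ℕ} {e : ℕ × ℕ → Finset ℕ}

lemma asvt_unique_occ (hhook : lam.rowLen 0 + lam.colLen 0 ≤ k + 1)
    (hstd : IsStdASVT k n lam e) {y : ℕ} {c d : ℕ × ℕ}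
    (h1 : 1 ≤ y) (h2 : y ≤ n) (hc : y ∈ e c) (hd : y ∈ e d) : c = d := by
  obtain ⟨δ, hcore, hcells, i, hex, hiff⟩ := hstd.2.2 y h1 h2
  have hsub : ∀ c' ∈ δ, c' ∈ lam := by
    intro c' hc'
    have : c' ∈ δ.cells := hc'
    rw [hcells] at this
    simp only [shapeLe, Finset.mem_filter, YoungDiagram.mem_cells] at this
    exact this.1
  obtain ⟨hremc, hresc⟩ := (hiff c).1 hc
  obtain ⟨hremd, hresd⟩ := (hiff d).1 hd
  exact corner_unique hhook hsub hremc hremd (hresc.trans hresd.symm)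

lemma asvt_letter_bounds (hstd : IsStdASVT k n lam e) {y : ℕ} {c : ℕ × ℕ}
    (hy : y ∈ e c) : 1 ≤ y ∧ y ≤ n :=
  ⟨hstd.1.2.1 c y hy, hstd.2.1 c y hy⟩

lemma mem_collapse {x : ℕ} {c : ℕ × ℕ} (hstd : IsStdASVT k μ.sum lam e) :
    x ∈ collapse μ e c ↔ ∃ y ∈ alphaBlock μ x, y ∈ e c := by
  simp only [collapse, Finset.mem_image]
  constructor
  · rintro ⟨y, hy, rfl⟩
    obtain ⟨h1, h2⟩ := asvt_letter_bounds hstd hy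
    exact ⟨y, (mem_alphaBlock_blockOf h1 h2).1, hy⟩
  · rintro ⟨y, hyB, hy⟩
    exact ⟨y, hy, blockOf_eq hyB⟩

/-- In an affine set-valued tableau, among letters of one block, the cells are ordered
by columns in the same way as the letters. -/
lemma asvt_col_mono (hhook : lam.rowLen 0 + lam.colLen 0 ≤ k + 1)
    (hasvt : IsASVT k μ lam e) {x y z : ℕ} {cy cz : ℕ × ℕ}
    (hx1 : 1 ≤ x) (hx2 : x ≤ μ.length)
    (hyB : y ∈ alphaBlock μ x) (hzB : z ∈ alphaBlock μ x) (hyz : y < z)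
    (hcy : y ∈ e cy) (hcz : z ∈ e cz) : cy.2 < cz.2 := by
  obtain ⟨hstd, hblk⟩ := hasvt
  have hf := hstd.1
  obtain ⟨hy1, hy2⟩ := asvt_letter_bounds hstd hcy
  obtain ⟨hz1, hz2⟩ := asvt_letter_bounds hstd hcz
  have hlowy : IsLowestOcc e y cy :=
    ⟨hcy, fun d hd => (asvt_unique_occ hhook hstd hy1 hy2 hcy hd) ▸ le_rfl⟩
  have hlowz : IsLowestOcc e z cz :=
    ⟨hcz, fun d hd => (asvt_unique_occ hhook hstd hz1 hz2 hcz hd) ▸ le_rfl⟩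
  have hread := (hblk x hx1 hx2).1 y z hyB hzB hyz cy cz hlowy hlowz
  have hstrip := (hblk x hx1 hx2).2.2
  rcases hread with h | ⟨h1, h2⟩
  · by_contra hcon
    push_neg at hcon
    exact strip_no_se hf (fun c d hc hd hcd => hstrip c d hc hd hcd)
      hzB hyB hcz hcy h hcon
  · exact h2

lemma occ_collapse (hstd : IsStdASVT k μ.sum lam e) (x : ℕ) :
    occ lam (collapse μ e) x
      = lam.cells.filter (fun d => ∃ z ∈ alphaBlock μ x, z ∈ e d) := by
  apply Finset.filter_congr
  intro c _
  rw [mem_collapse hstd]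

/-- There is a cell containing `y`. -/
lemma asvt_exists_occ (hstd : IsStdASVT k n lam e) {y : ℕ}
    (h1 : 1 ≤ y) (h2 : y ≤ n) : ∃ c, y ∈ e c := by
  obtain ⟨δ, _, _, i, hex, _⟩ := hstd.2.2 y h1 h2
  exact hex

/-- A cell contains at most one letter of each block. -/
lemma asvt_block_unique_in_cell (hhook : lam.rowLen 0 + lam.colLen 0 ≤ k + 1)
    (hasvt : IsASVT k μ lam e) {x y z : ℕ} {c : ℕ × ℕ}
    (hx1 : 1 ≤ x) (hx2 : x ≤ μ.length)
    (hyB : y ∈ alphaBlock μ x) (hzB : z ∈ alphaBlock μ x)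
    (hy : y ∈ e c) (hz : z ∈ e c) : y = z := by
  obtain ⟨hstd, hblk⟩ := hasvt
  by_contra hne
  have key : ∀ y z : ℕ, y ∈ alphaBlock μ x → z ∈ alphaBlock μ x → y < z →
      y ∈ e c → z ∈ e c → False := by
    intro y z hyB hzB hyz hy hz
    obtain ⟨hy1, hy2⟩ := asvt_letter_bounds hstd hy
    obtain ⟨hz1, hz2⟩ := asvt_letter_bounds hstd hz
    have hlowy : IsLowestOcc e y c :=
      ⟨hy, fun d hd => (asvt_unique_occ hhook hstd hy1 hy2 hy hd) ▸ le_rfl⟩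
    have hlowz : IsLowestOcc e z c :=
      ⟨hz, fun d hd => (asvt_unique_occ hhook hstd hz1 hz2 hz hd) ▸ le_rfl⟩
    have := (hblk x hx1 hx2).1 y z hyB hzB hyz c c hlowy hlowz
    rcases this with h | ⟨_, h⟩ <;> omega
  rcases lt_or_gt_of_ne hne with h | h
  · exact key y z hyB hzB h hy hz
  · exact key z y hzB hyB h hz hy

/-- The rank of the cell of `y` among the cells of its block equals the position of `y`
within the block. -/
lemma asvt_rank (hhook : lam.rowLen 0 + lam.colLen 0 ≤ k + 1)
    (hasvt : IsASVT k μ lam e) {x y : ℕ} {cy : ℕ × ℕ}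
    (hx1 : 1 ≤ x) (hx2 : x ≤ μ.length)
    (hyB : y ∈ alphaBlock μ x) (hcy : y ∈ e cy) :
    rnk lam (collapse μ e) x cy = y - (μ.take (x-1)).sum - 1 := by
  obtain ⟨hstd, hblk⟩ := hasvt
  have hf := hstd.1
  have hyBB := mem_alphaBlock_iff.1 hyB
  have hrw : rnk lam (collapse μ e) x cy
      = ((lam.cells.filter (fun d => ∃ z ∈ alphaBlock μ x, z ∈ e d)).filter
          (fun d => d.2 < cy.2)).card := by
    rw [rnk, occ_collapse hstd]
  rw [hrw]
  have hcard : ((lam.cells.filter (fun d => ∃ z ∈ alphaBlock μ x, z ∈ e d)).filter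
      (fun d => d.2 < cy.2)).card = (Finset.Ioo ((μ.take (x-1)).sum) y).card := by
    apply Finset.card_bij
      (i := fun d _ => ((e d).filter (fun z => z ∈ alphaBlock μ x)).min'
        (by
          rename_i hd
          simp only [Finset.mem_filter, YoungDiagram.mem_cells] at hd
          obtain ⟨⟨_, z, hzB, hzd⟩, _⟩ := hd
          exact ⟨z, Finset.mem_filter.2 ⟨hzd, hzB⟩⟩))
    · intro d hd
      simp only [Finset.mem_filter, YoungDiagram.mem_cells] at hd
      obtain ⟨⟨hdlam, z0, hz0B, hz0d⟩, hdcol⟩ := hd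
      have hne : ((e d).filter (fun z => z ∈ alphaBlock μ x)).Nonempty :=
        ⟨z0, Finset.mem_filter.2 ⟨hz0d, hz0B⟩⟩
      have hwmem := Finset.min'_mem _ hne
      obtain ⟨hwd, hwB⟩ := Finset.mem_filter.1 hwmem
      set w := ((e d).filter (fun z => z ∈ alphaBlock μ x)).min' hne with hw
      have hwBB := mem_alphaBlock_iff.1 hwB
      have hwlty : w < y := by
        rcases lt_trichotomy w y with h | h | h
        · exact h
        · exfalso
          subst h
          obtain ⟨h1, h2⟩ := asvt_letter_bounds hstd hwd
          have := asvt_unique_occ hhook hstd h1 h2 hwd hcy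
          subst this
          omega
        · exfalso
          have := asvt_col_mono hhook ⟨hstd, hblk⟩ hx1 hx2 hyB hwB h hcy hwd
          omega
      show ((e d).filter (fun z => z ∈ alphaBlock μ x)).min' _ ∈ _
      exact Finset.mem_Ioo.2 ⟨hwBB.1, hwlty⟩
    · intro d hd d' hd' heq
      simp only [Finset.mem_filter, YoungDiagram.mem_cells] at hd hd'
      have hne : ((e d).filter (fun z => z ∈ alphaBlock μ x)).Nonempty := by
        obtain ⟨⟨_, z, hzB, hzd⟩, _⟩ := hd
        exact ⟨z, Finset.mem_filter.2 ⟨hzd, hzB⟩⟩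
      have hne' : ((e d').filter (fun z => z ∈ alphaBlock μ x)).Nonempty := by
        obtain ⟨⟨_, z, hzB, hzd⟩, _⟩ := hd'
        exact ⟨z, Finset.mem_filter.2 ⟨hzd, hzB⟩⟩
      have hwmem := Finset.min'_mem _ hne
      have hwmem' := Finset.min'_mem _ hne'
      obtain ⟨hwd, hwB⟩ := Finset.mem_filter.1 hwmem
      obtain ⟨hwd', hwB'⟩ := Finset.mem_filter.1 hwmem'
      have heq' : ((e d).filter (fun z => z ∈ alphaBlock μ x)).min' hne
          = ((e d').filter (fun z => z ∈ alphaBlock μ x)).min' hne' := heq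
      rw [heq'] at hwd
      obtain ⟨h1, h2⟩ := asvt_letter_bounds hstd hwd
      exact asvt_unique_occ hhook hstd h1 h2 hwd hwd'
    · intro z hz
      have hzmem := Finset.mem_Ioo.1 hz
      have hzB : z ∈ alphaBlock μ x := mem_alphaBlock_iff.2 ⟨hzmem.1, by omega⟩
      obtain ⟨d, hzd⟩ := asvt_exists_occ hstd (y := z) (by omega)
        (by
          have := takesum_le_sum μ x
          omega)
      have hdmem : d ∈ (lam.cells.filter
          (fun d => ∃ z ∈ alphaBlock μ x, z ∈ e d)).filter (fun d => d.2 < cy.2) := by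
        simp only [Finset.mem_filter, YoungDiagram.mem_cells]
        refine ⟨⟨svf_cell hf hzd, z, hzB, hzd⟩, ?_⟩
        exact asvt_col_mono hhook ⟨hstd, hblk⟩ hx1 hx2 hzB hyB hzmem.2 hzd hcy
      refine ⟨d, hdmem, ?_⟩
      have hne : ((e d).filter (fun z => z ∈ alphaBlock μ x)).Nonempty :=
        ⟨z, Finset.mem_filter.2 ⟨hzd, hzB⟩⟩
      have hwmem := Finset.min'_mem _ hne
      obtain ⟨hwd, hwB⟩ := Finset.mem_filter.1 hwmem
      show ((e d).filter (fun z => z ∈ alphaBlock μ x)).min' _ = z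
      exact asvt_block_unique_in_cell hhook ⟨hstd, hblk⟩ hx1 hx2 hwB hzB hwd hzd
  rw [hcard, Nat.card_Ioo]

end Collapse
section Main

variable {k : ℕ} {lam : YoungDiagram} {μ : List ℕ} {e : ℕ × ℕ → Finset ℕ}

lemma asvt_block_cells_card (hhook : lam.rowLen 0 + lam.colLen 0 ≤ k + 1)
    (hasvt : IsASVT k μ lam e) {x : ℕ} (hx1 : 1 ≤ x) (hx2 : x ≤ μ.length) :
    (lam.cells.filter (fun c => ∃ y ∈ alphaBlock μ x, y ∈ e c)).card
      = μ.getD (x-1) 0 := by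
  obtain ⟨hstd, hblk⟩ := hasvt
  have hf := hstd.1
  have hstrip := (hblk x hx1 hx2).2.2
  have hinj : Set.InjOn (residue k)
      ↑(lam.cells.filter (fun c => ∃ y ∈ alphaBlock μ x, y ∈ e c)) := by
    intro c hc d hd hres
    rw [Finset.mem_coe, Finset.mem_filter] at hc hd
    exact strip_residue_injOn hf hhook hstrip hc.2 hd.2 hres
  rw [← Finset.card_image_of_injOn hinj]
  exact (hblk x hx1 hx2).2.1

lemma collapse_isSVT (hhook : lam.rowLen 0 + lam.colLen 0 ≤ k + 1)
    (hasvt : IsASVT k μ lam e) : IsSVT μ lam (collapse μ e) := by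
  obtain ⟨hstd, hblk⟩ := hasvt
  have hf := hstd.1
  refine ⟨⟨?_, ?_, ?_, ?_⟩, ?_, ?_⟩
  · intro c
    rw [hf.1 c]
    constructor
    · rintro ⟨y, hy⟩; exact ⟨blockOf μ y, Finset.mem_image_of_mem _ hy⟩
    · rintro ⟨x, hx⟩
      obtain ⟨y, hy, _⟩ := Finset.mem_image.1 hx
      exact ⟨y, hy⟩
  · intro c x hx
    obtain ⟨y, hy, rfl⟩ := Finset.mem_image.1 hx
    obtain ⟨h1, h2⟩ := asvt_letter_bounds hstd hy
    exact (mem_alphaBlock_blockOf h1 h2).2.1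
  · intro r c a ha b hb
    obtain ⟨y, hy, rfl⟩ := Finset.mem_image.1 ha
    obtain ⟨z, hz, rfl⟩ := Finset.mem_image.1 hb
    obtain ⟨hy1, hy2⟩ := asvt_letter_bounds hstd hy
    obtain ⟨hz1, hz2⟩ := asvt_letter_bounds hstd hz
    have hyz : y < z := hf.2.2.1 r c y hy z hz
    have hle : blockOf μ y ≤ blockOf μ z := blockOf_mono (by omega) hz2
    rcases eq_or_lt_of_le hle with h | h
    · exfalso
      obtain ⟨hyB, hx1, hx2⟩ := mem_alphaBlock_blockOf hy1 hy2
      obtain ⟨hzB, _, _⟩ := mem_alphaBlock_blockOf hz1 hz2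
      rw [← h] at hzB
      have := (hblk (blockOf μ y) hx1 hx2).2.2 (r, c) (r+1, c)
        ⟨y, hyB, hy⟩ ⟨z, hzB, hz⟩ rfl
      have := congrArg Prod.fst this
      simp at this
    · exact h
  · intro r c a ha b hb
    obtain ⟨y, hy, rfl⟩ := Finset.mem_image.1 ha
    obtain ⟨z, hz, rfl⟩ := Finset.mem_image.1 hb
    obtain ⟨hz1, hz2⟩ := asvt_letter_bounds hstd hz
    exact blockOf_mono (hf.2.2.2 r c y hy z hz) hz2
  · intro c x hx
    obtain ⟨y, hy, rfl⟩ := Finset.mem_image.1 hx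
    obtain ⟨h1, h2⟩ := asvt_letter_bounds hstd hy
    exact (mem_alphaBlock_blockOf h1 h2).2.2
  · intro x hx1 hx2
    have : lam.cells.filter (fun c => x ∈ collapse μ e c)
        = lam.cells.filter (fun c => ∃ y ∈ alphaBlock μ x, y ∈ e c) := by
      apply Finset.filter_congr
      intro c _
      rw [mem_collapse hstd]
    rw [this]
    exact asvt_block_cells_card hhook ⟨hstd, hblk⟩ hx1 hx2

lemma stdz_collapse (hhook : lam.rowLen 0 + lam.colLen 0 ≤ k + 1)
    (hasvt : IsASVT k μ lam e) : stdz μ lam (collapse μ e) = e := by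
  have hstd := hasvt.1
  funext c
  ext u
  rw [mem_stdz]
  constructor
  · rintro ⟨x, hx, rfl⟩
    obtain ⟨z, hzB, hzc⟩ := (mem_collapse hstd).1 hx
    obtain ⟨hz1, hz2⟩ := asvt_letter_bounds hstd hzc
    obtain ⟨_, hb1, hb2⟩ := mem_alphaBlock_blockOf hz1 hz2
    rw [blockOf_eq hzB] at hb1 hb2
    have hfz : fstd μ lam (collapse μ e) x c = z := by
      have hr := asvt_rank hhook hasvt hb1 hb2 hzB hzc
      have := mem_alphaBlock_iff.1 hzB
      simp only [fstd, hr]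
      omega
    rw [hfz]
    exact hzc
  · intro hz
    obtain ⟨hz1, hz2⟩ := asvt_letter_bounds hstd hz
    obtain ⟨hzB, hb1, hb2⟩ := mem_alphaBlock_blockOf hz1 hz2
    refine ⟨blockOf μ u, (mem_collapse hstd).2 ⟨u, hzB, hz⟩, ?_⟩
    have hr := asvt_rank hhook hasvt hb1 hb2 hzB hz
    have := mem_alphaBlock_iff.1 hzB
    simp only [fstd, hr]
    omega

lemma collapse_stdz (hsvt : IsSVT μ lam e) : collapse μ (stdz μ lam e) = e := by
  funext c
  ext z
  constructor
  · intro hz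
    obtain ⟨y, hy, rfl⟩ := Finset.mem_image.1 hz
    obtain ⟨x, hx, rfl⟩ := mem_stdz.1 hy
    obtain ⟨h1, h2⟩ := letter_bounds hsvt hx
    rw [blockOf_eq (fstd_mem_block hsvt h1 h2 hx)]
    exact hx
  · intro hz
    obtain ⟨h1, h2⟩ := letter_bounds hsvt hz
    exact Finset.mem_image.2 ⟨fstd μ lam e z c, mem_stdz.2 ⟨z, hz, rfl⟩,
      blockOf_eq (fstd_mem_block hsvt h1 h2 hz)⟩

end Main
/-- Let `λ` be a `k`-bounded partition whose largest hook length satisfies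
`λ₁ + ℓ(λ) - 1 ≤ k`.  Then for every composition `μ`, `𝒦^{(k)}_{λμ}` equals the number
`𝒦_{λμ}` of set-valued tableaux of shape `λ` and weight `μ`; consequently the affine
Grothendieck polynomial coincides with the stable Grothendieck polynomial, `G^{(k)}_λ = G_λ`
(coefficient-wise on the monomial symmetric functions). -/
theorem affineGrothendieck_eq_Grothendieck_of_small_hook
    (k : ℕ) (hk : 1 ≤ k) (lam : YoungDiagram) (hlam : IsKBounded k lam)
    (hhook : lam.rowLen 0 + lam.colLen 0 ≤ k + 1) :
    (∀ μ : List ℕ, (∀ a ∈ μ, 1 ≤ a) → Kcal k lam μ = KcalSV lam μ) ∧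
    (∀ ν : YoungDiagram, IsKBounded k ν →
      Gcoeff k lam ν = (-1) ^ (lam.card + ν.card) * (KcalSV lam ν.rowLens : ℤ)) := by
  have hpart1 : ∀ μ : List ℕ, Kcal k lam μ = KcalSV lam μ := by
    intro μ
    have h1 : Kcal k lam μ = Nat.card {e : ℕ × ℕ → Finset ℕ // IsASVT k μ lam e} := by
      unfold Kcal
      rw [coreOf_eq_self hhook]
    rw [h1]
    exact Nat.card_congr
      { toFun := fun p => ⟨collapse μ p.1, collapse_isSVT hhook p.2⟩
        invFun := fun p => ⟨stdz μ lam p.1, stdz_isASVT hhook p.2⟩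
        left_inv := fun p => Subtype.ext (stdz_collapse hhook p.2)
        right_inv := fun p => Subtype.ext (collapse_stdz p.2) }
  refine ⟨fun μ _ => hpart1 μ, fun ν hν => ?_⟩
  simp only [Gcoeff, if_pos hν, hpart1 ν.rowLens]

end AffineKTheory
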